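/- For every positive integer a, there exists a non-negative integer k such that z^k(2^a) = 12. -/

import Mathlib

/-!
The 2-adic valuation of `F (3 * 2 ^ (s + 1))` is `s + 3`: induct on `s` with
`F (2n) = F n * L n`, where the Lucas number `L n = 2 F (n - 1) + F n` is `2 mod 4`
whenever `6 ∣ n`, because `F mod 4` has period 6. As `z n ∣ m ↔ n ∣ F m`, this gives
`z (2 ^ a) = z (3 * 2 ^ a) = 3 * 2 ^ (a - 2)` for `a ≥ 4`, so the iterates run down
`3 * 2 ^ b` in steps of two until they reach `6`, `12` or `24`, all of which go to `12`;
the powers `2, 4, 8` are handled by direct computation.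
-/

/-- The order of appearance of `n` in the Fibonacci sequence: the smallest
positive integer `ℓ` such that `n` divides the `ℓ`-th Fibonacci number. -/
noncomputable def z (n : ℕ) : ℕ := sInf {ℓ : ℕ | 0 < ℓ ∧ n ∣ Nat.fib ℓ}

open Nat (fib)

lemma dvd_fib_z (n : ℕ) : n ∣ fib (z n) := by
  rcases Set.eq_empty_or_nonempty {ℓ : ℕ | 0 < ℓ ∧ n ∣ fib ℓ} with h | h
  · simp [z, h]
  · exact (Nat.sInf_mem h).2

lemma dvd_fib_iff_z_dvd {n m : ℕ} : n ∣ fib m ↔ z n ∣ m := by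
  refine ⟨fun h => ?_, fun h => (dvd_fib_z n).trans (Nat.fib_dvd _ _ h)⟩
  rcases m.eq_zero_or_pos with rfl | hm
  · exact dvd_zero _
  have hz : 0 < z n := (Nat.sInf_mem (⟨m, hm, h⟩ : {ℓ : ℕ | 0 < ℓ ∧ n ∣ fib ℓ}.Nonempty)).1
  have hgcd : z n ≤ (z n).gcd m :=
    Nat.sInf_le ⟨Nat.gcd_pos_of_pos_left m hz, Nat.fib_gcd _ _ ▸ Nat.dvd_gcd (dvd_fib_z n) h⟩
  rw [← Nat.gcd_eq_left_iff_dvd]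
  exact le_antisymm (Nat.le_of_dvd hz (Nat.gcd_dvd_left _ _)) hgcd

lemma z_dvd_z_of_dvd {m n : ℕ} (h : m ∣ n) : z m ∣ z n :=
  dvd_fib_iff_z_dvd.1 (h.trans (dvd_fib_z n))

lemma z_eq_of_minimal {n L : ℕ} (hL : 0 < L) (hdvd : n ∣ fib L)
    (hmin : ∀ ℓ < L, 0 < ℓ → ¬ n ∣ fib ℓ) : z n = L :=
  le_antisymm (Nat.sInf_le ⟨hL, hdvd⟩)
    (le_csInf ⟨L, hL, hdvd⟩ fun ℓ ⟨hℓ, h⟩ => not_lt.1 fun hlt => hmin ℓ hlt hℓ h)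

lemma z_two : z 2 = 3 := z_eq_of_minimal (by norm_num) (by decide) (by decide)
lemma z_three : z 3 = 4 := z_eq_of_minimal (by norm_num) (by decide) (by decide)
lemma z_four : z 4 = 6 := z_eq_of_minimal (by norm_num) (by decide) (by decide)
lemma z_six : z 6 = 12 := z_eq_of_minimal (by norm_num) (by decide) (by decide)
lemma z_eight : z 8 = 6 := z_eq_of_minimal (by norm_num) (by decide) (by decide)
lemma z_twentyfour : z 24 = 12 := z_eq_of_minimal (by norm_num) (by decide) (by decide)

lemma fib_mod_four_periodic : Function.Periodic (fun n => fib n % 4) 6 := by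
  intro n
  show fib (n + 5 + 1) % 4 = fib n % 4
  rw [Nat.fib_add, show fib 5 = 5 from rfl, show fib (5 + 1) = 8 from rfl]
  omega

lemma padicValNat_two_eq_one_of_mod_four_eq_two {m : ℕ} (h : m % 4 = 2) :
    padicValNat 2 m = 1 := by
  have h1 : 2 ^ 1 ∣ m := by omega
  have h2 : ¬ 2 ^ 2 ∣ m := by omega
  rw [padicValNat_dvd_iff_le (by omega)] at h1 h2
  omega

lemma padicValNat_two_fib_two_mul {n : ℕ} (hn : 6 ∣ n) (hn0 : n ≠ 0) :
    padicValNat 2 (fib (2 * n)) = padicValNat 2 (fib n) + 1 := by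
  obtain ⟨t, rfl⟩ : ∃ t, n = 6 * t + 5 + 1 := ⟨n / 6 - 1, by omega⟩
  -- the second factor of `Nat.fib_two_mul_add_two` is the Lucas number `L n`
  have hlucas : (2 * fib (6 * t + 5) + fib (6 * t + 5 + 1)) % 4 = 2 := by
    have h5 := fib_mod_four_periodic.nat_mul t 5
    have h6 := fib_mod_four_periodic.nat_mul t 6
    rw [Nat.cast_id, add_comm, mul_comm] at h5 h6
    rw [show fib 5 = 5 from rfl] at h5
    rw [show fib 6 = 8 from rfl] at h6
    show (2 * fib (6 * t + 5) + fib (6 * t + 6)) % 4 = 2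
    omega
  rw [show 2 * (6 * t + 5 + 1) = 2 * (6 * t + 5) + 2 by ring, Nat.fib_two_mul_add_two,
    padicValNat.mul (Nat.fib_pos.2 (by omega)).ne' (by omega),
    padicValNat_two_eq_one_of_mod_four_eq_two hlucas]

lemma padicValNat_two_fib_three_mul_two_pow (s : ℕ) :
    padicValNat 2 (fib (3 * 2 ^ (s + 1))) = s + 3 := by
  induction s with
  | zero => rw [show fib (3 * 2 ^ (0 + 1)) = 2 ^ 3 by decide, padicValNat.prime_pow]
  | succ s ih =>
    rw [show 3 * 2 ^ (s + 1 + 1) = 2 * (3 * 2 ^ (s + 1)) by ring,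
      padicValNat_two_fib_two_mul ⟨2 ^ s, by ring⟩ (by positivity), ih]

lemma two_pow_dvd_fib_three_mul_two_pow_iff {s k : ℕ} :
    2 ^ k ∣ fib (3 * 2 ^ (s + 1)) ↔ k ≤ s + 3 := by
  rw [padicValNat_dvd_iff_le (Nat.fib_pos.2 (by positivity)).ne',
    padicValNat_two_fib_three_mul_two_pow]

lemma z_two_pow (s : ℕ) : z (2 ^ (s + 4)) = 3 * 2 ^ (s + 2) := by
  have hdvd : z (2 ^ (s + 4)) ∣ 3 * 2 ^ (s + 2) :=
    dvd_fib_iff_z_dvd.1 (two_pow_dvd_fib_three_mul_two_pow_iff.2 (by omega))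
  have h3 : 3 ∣ z (2 ^ (s + 4)) := z_two ▸ z_dvd_z_of_dvd (dvd_pow_self 2 (by omega))
  -- so `z (2 ^ (s + 4)) = 3 * 2 ^ j` with `j ≤ s + 2`, and `j ≤ s + 1` is too small
  obtain ⟨e, he⟩ := h3
  rw [he] at hdvd ⊢
  have he2 : e ∣ 2 ^ (s + 2) := Nat.dvd_of_mul_dvd_mul_left (by norm_num) hdvd
  have he1 : ¬ e ∣ 2 ^ (s + 1) := fun h => by
    have := dvd_fib_iff_z_dvd.2 (he ▸ mul_dvd_mul_left 3 h)
    rw [two_pow_dvd_fib_three_mul_two_pow_iff] at this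
    omega
  rw [Nat.eq_prime_pow_of_dvd_least_prime_pow Nat.prime_two he1 he2]

lemma z_three_mul_two_pow (s : ℕ) : z (3 * 2 ^ (s + 4)) = 3 * 2 ^ (s + 2) := by
  apply Nat.dvd_antisymm
  · apply dvd_fib_iff_z_dvd.1
    apply Nat.Coprime.mul_dvd_of_dvd_of_dvd (Nat.Coprime.pow_right _ (by norm_num))
    · exact dvd_fib_iff_z_dvd.2 (z_three ▸ ⟨3 * 2 ^ s, by ring⟩)
    · exact two_pow_dvd_fib_three_mul_two_pow_iff.2 (by omega)
  · exact z_two_pow s ▸ z_dvd_z_of_dvd (dvd_mul_left _ _)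

lemma exists_iterate_eq_of_apply {α : Type*} {f : α → α} {x y : α}
    (h : ∃ k, f^[k] (f x) = y) : ∃ k, f^[k] x = y :=
  let ⟨k, hk⟩ := h
  ⟨k + 1, hk⟩

lemma exists_iterate_z_three_mul_two_pow_eq_twelve (b : ℕ) (hb : 0 < b) :
    ∃ k, z^[k] (3 * 2 ^ b) = 12 := by
  induction b using Nat.strong_induction_on with
  | _ b ih =>
    match b, hb with
    | 1, _ => exact exists_iterate_eq_of_apply ⟨0, z_six⟩
    | 2, _ => exact ⟨0, rfl⟩
    | 3, _ => exact exists_iterate_eq_of_apply ⟨0, z_twentyfour⟩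
    | s + 4, _ =>
      apply exists_iterate_eq_of_apply
      rw [z_three_mul_two_pow]
      exact ih (s + 2) (by omega) (by omega)

theorem two_pow_reaches_twelve (a : ℕ) (ha : 0 < a) :
    ∃ k : ℕ, z^[k] (2 ^ a) = 12 := by
  have h6 : ∃ k, z^[k] 6 = 12 := exists_iterate_z_three_mul_two_pow_eq_twelve 1 one_pos
  have h4 : ∃ k, z^[k] 4 = 12 := exists_iterate_eq_of_apply (z_four ▸ h6)
  match a, ha with
  | 1, _ => exact exists_iterate_eq_of_apply (z_two ▸ exists_iterate_eq_of_apply (z_three ▸ h4))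
  | 2, _ => exact h4
  | 3, _ => exact exists_iterate_eq_of_apply (z_eight ▸ h6)
  | s + 4, _ =>
    apply exists_iterate_eq_of_apply
    rw [z_two_pow]
    exact exists_iterate_z_three_mul_two_pow_eq_twelve _ (by positivity)
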